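/- arXiv:2604.05957 — 4 statements merged into one kernel-verified Lean document; each statement's English description precedes it below -/
import Mathlib

section
/- Let x₁, x₂, x₃ ∈ SL(2,ℂ) satisfy the magic-manifold relations [x₁, x₃x₁⁻¹x₂] = 1 and [x₂, x₁x₂⁻¹x₃] = 1. Then [x₁⁻¹, x₂] = [x₂⁻¹, x₃] = [x₃⁻¹, x₁]. -/
open Matrix MatrixGroups
open scoped commutatorElement

theorem commutatorElement_inv_eq_of_commutatorElement_mul_inv_mul_eq_one {G : Type*} [Group G]
    {a b c : G} (h : ⁅a, c * a⁻¹ * b⁆ = 1) : ⁅c⁻¹, a⁆ = ⁅a⁻¹, b⁆ := by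
  have hw : a * (c * a⁻¹ * b) = c * a⁻¹ * b * a := commutatorElement_eq_one_iff_mul_comm.mp h
  calc ⁅c⁻¹, a⁆ = c⁻¹ * (a * (c * a⁻¹ * b)) * b⁻¹ := by group
    _ = c⁻¹ * (c * a⁻¹ * b * a) * b⁻¹ := by rw [hw]
    _ = ⁅a⁻¹, b⁆ := by group

theorem stmt_9 (x₁ x₂ x₃ : SL(2, ℂ))
    (h1 : ⁅x₁, x₃ * x₁⁻¹ * x₂⁆ = 1)
    (h2 : ⁅x₂, x₁ * x₂⁻¹ * x₃⁆ = 1) :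
    ⁅x₁⁻¹, x₂⁆ = ⁅x₂⁻¹, x₃⁆ ∧ ⁅x₂⁻¹, x₃⁆ = ⁅x₃⁻¹, x₁⁆ := by
  have e₂ := commutatorElement_inv_eq_of_commutatorElement_mul_inv_mul_eq_one h2
  have e₁ := commutatorElement_inv_eq_of_commutatorElement_mul_inv_mul_eq_one h1
  exact ⟨e₂, e₂.symm.trans e₁.symm⟩
end

section
/- Let x₁, x₂, x₃ ∈ SL(2,ℂ) define an irreducible representation of the group ⟨x₁,x₂,x₃ | [x₁,x₃x₁⁻¹x₂]=1, [x₂,x₁x₂⁻¹x₃]=1⟩ (i.e., the three matrices have no common eigenvector). Then x₁x₂ ≠ x₂x₁, x₁x₃ ≠ x₃x₁, and x₂x₃ ≠ x₃x₂; in particular none of x₁, x₂, x₃ equals ±1. -/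
open Matrix MatrixGroups
open scoped commutatorElement

/-- A nonzero vector `v` is an eigenvector of matrix `m`. -/
def IsEigenvector (m : Matrix (Fin 2) (Fin 2) ℂ) (v : Fin 2 → ℂ) : Prop :=
  ∃ c : ℂ, m.mulVec v = c • v

/-! In a group with `[x₁, x₃x₁⁻¹x₂] = 1` and `[x₂, x₁x₂⁻¹x₃] = 1`, the first relation makes
`x₁` commute with `x₂` iff it commutes with `x₃`, and the second makes `x₂` commute with `x₃`
iff it commutes with `x₁`. So if one pair commutes, all three matrices commute pairwise, and
pairwise commuting endomorphisms of a nonzero finite-dimensional complex space have a common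
eigenvector, against irreducibility. A scalar `±1` commutes with everything. -/

theorem Commute.commute_iff_of_commute_mul_inv_mul {G : Type*} [Group G] {a b c : G}
    (h : Commute a (c * a⁻¹ * b)) : Commute a b ↔ Commute a c := by
  constructor
  · intro hab
    simpa [mul_assoc] using (h.mul_right hab.inv_right).mul_right (Commute.refl a)
  · intro hac
    simpa [mul_assoc] using ((Commute.refl a).mul_right hac.inv_right).mul_right h

namespace Module.End

variable {K V : Type*} [Field K] [IsAlgClosed K] [AddCommGroup V] [Module K V]
  [FiniteDimensional K V]

theorem exists_inf_eigenspace_ne_bot_of_mapsTo (f : End K V) {p : Submodule K V} (hp : p ≠ ⊥)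
    (hfp : ∀ x ∈ p, f x ∈ p) : ∃ μ, p ⊓ f.eigenspace μ ≠ ⊥ := by
  have : Nontrivial p := Submodule.nontrivial_iff_ne_bot.mpr hp
  obtain ⟨μ, hμ⟩ := exists_eigenvalue (f.restrict hfp)
  refine ⟨μ, ?_⟩
  rw [eigenspace, Submodule.inf_genEigenspace f p hfp, Ne,
    ← Submodule.map_bot p.subtype,
    (Submodule.map_injective_of_injective p.injective_subtype).eq_iff]
  exact hμ

theorem exists_eigenvector_of_commute [Nontrivial V] {f g k : End K V} (hfg : Commute f g)
    (hfk : Commute f k) (hgk : Commute g k) :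
    ∃ v : V, v ≠ 0 ∧ (∃ a : K, f v = a • v) ∧ (∃ b : K, g v = b • v) ∧ ∃ c : K, k v = c • v := by
  obtain ⟨a, ha⟩ := exists_inf_eigenspace_ne_bot_of_mapsTo f (p := ⊤) top_ne_bot (by simp)
  rw [top_inf_eq] at ha
  obtain ⟨b, hb⟩ := exists_inf_eigenspace_ne_bot_of_mapsTo g ha
    (fun x hx => mapsTo_genEigenspace_of_comm hfg a 1 hx)
  obtain ⟨c, hc⟩ := exists_inf_eigenspace_ne_bot_of_mapsTo k hb
    (fun x hx => ⟨mapsTo_genEigenspace_of_comm hfk a 1 hx.1,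
      mapsTo_genEigenspace_of_comm hgk b 1 hx.2⟩)
  obtain ⟨v, ⟨⟨hva, hvb⟩, hvc⟩, hv⟩ := Submodule.exists_mem_ne_zero_of_ne_bot hc
  exact ⟨v, hv, ⟨a, mem_eigenspace_iff.mp hva⟩, ⟨b, mem_eigenspace_iff.mp hvb⟩,
    ⟨c, mem_eigenspace_iff.mp hvc⟩⟩

end Module.End

theorem Matrix.SpecialLinearGroup.coe_ne_one_and_ne_neg_one_of_not_commute {n R : Type*}
    [Fintype n] [DecidableEq n] [CommRing R] {x y : SpecialLinearGroup n R}
    (h : ¬Commute x y) : (x : Matrix n n R) ≠ 1 ∧ (x : Matrix n n R) ≠ -1 := by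
  constructor <;> intro hx <;> exact h (Subtype.ext (by simp [hx]))

theorem exists_isEigenvector_of_commute {x₁ x₂ x₃ : SL(2, ℂ)} (h₁₂ : Commute x₁ x₂)
    (h₁₃ : Commute x₁ x₃) (h₂₃ : Commute x₂ x₃) :
    ∃ v : Fin 2 → ℂ, v ≠ 0 ∧ IsEigenvector (x₁ : Matrix (Fin 2) (Fin 2) ℂ) v ∧
      IsEigenvector (x₂ : Matrix (Fin 2) (Fin 2) ℂ) v ∧
      IsEigenvector (x₃ : Matrix (Fin 2) (Fin 2) ℂ) v := by
  let φ := (Matrix.toLinAlgEquiv' : Matrix (Fin 2) (Fin 2) ℂ ≃ₐ[ℂ] _).toMonoidHom.comp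
    SpecialLinearGroup.coeMonoidHom
  simpa [φ, IsEigenvector] using
    Module.End.exists_eigenvector_of_commute (h₁₂.map φ) (h₁₃.map φ) (h₂₃.map φ)

theorem stmt_10 (x₁ x₂ x₃ : SL(2, ℂ))
    (h1 : ⁅x₁, x₃ * x₁⁻¹ * x₂⁆ = 1)
    (h2 : ⁅x₂, x₁ * x₂⁻¹ * x₃⁆ = 1)
    (hirr : ¬ ∃ v : Fin 2 → ℂ, v ≠ 0 ∧
      IsEigenvector (x₁ : Matrix (Fin 2) (Fin 2) ℂ) v ∧
      IsEigenvector (x₂ : Matrix (Fin 2) (Fin 2) ℂ) v ∧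
      IsEigenvector (x₃ : Matrix (Fin 2) (Fin 2) ℂ) v) :
    (x₁ * x₂ ≠ x₂ * x₁ ∧ x₁ * x₃ ≠ x₃ * x₁ ∧ x₂ * x₃ ≠ x₃ * x₂) ∧
      (∀ x ∈ ({x₁, x₂, x₃} : Set (SL(2, ℂ))),
        (x : Matrix (Fin 2) (Fin 2) ℂ) ≠ 1 ∧ (x : Matrix (Fin 2) (Fin 2) ℂ) ≠ -1) := by
  have e₁ := (commutatorElement_eq_one_iff_commute.mp h1).commute_iff_of_commute_mul_inv_mul
  have e₂ := (commutatorElement_eq_one_iff_commute.mp h2).commute_iff_of_commute_mul_inv_mul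
  have h₁₂ : ¬Commute x₁ x₂ := fun h =>
    hirr (exists_isEigenvector_of_commute h (e₁.mp h) (e₂.mpr h.symm))
  have h₁₃ : ¬Commute x₁ x₃ := fun h => h₁₂ (e₁.mpr h)
  have h₂₃ : ¬Commute x₂ x₃ := fun h => h₁₂ (e₂.mp h).symm
  refine ⟨⟨h₁₂, h₁₃, h₂₃⟩, ?_⟩
  rintro x (rfl | rfl | rfl)
  · exact SpecialLinearGroup.coe_ne_one_and_ne_neg_one_of_not_commute h₁₂
  · exact SpecialLinearGroup.coe_ne_one_and_ne_neg_one_of_not_commute (mt Commute.symm h₁₂)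
  · exact SpecialLinearGroup.coe_ne_one_and_ne_neg_one_of_not_commute (mt Commute.symm h₁₃)
end

section
/- Let x₁, x₂, x₃ ∈ SL(2,ℂ) with x₁ ≠ ±1, suppose x₃x₁⁻¹x₂ commutes with x₁, and write x₃x₁⁻¹x₂ = α·x₁ + β·1. Then x₃ = (α·r₁₂ + β·t₂)·x₁ − α·x₂ − β·x₂x₁, where t₂ = tr(x₂) and r₁₂ = tr(x₁x₂⁻¹). -/
open Matrix MatrixGroups

theorem stmt_12 (x₁ x₂ x₃ : SL(2, ℂ)) (α β : ℂ)
    (h1 : (x₁ : Matrix (Fin 2) (Fin 2) ℂ) ≠ 1)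
    (h2 : (x₁ : Matrix (Fin 2) (Fin 2) ℂ) ≠ -1)
    (hcomm : (x₃ * x₁⁻¹ * x₂) * x₁ = x₁ * (x₃ * x₁⁻¹ * x₂))
    (heq : ((x₃ * x₁⁻¹ * x₂ : SL(2, ℂ)) : Matrix (Fin 2) (Fin 2) ℂ) =
      α • (x₁ : Matrix (Fin 2) (Fin 2) ℂ) + β • (1 : Matrix (Fin 2) (Fin 2) ℂ)) :
    (x₃ : Matrix (Fin 2) (Fin 2) ℂ) =
      (α * Matrix.trace ((x₁ * x₂⁻¹ : SL(2, ℂ)) : Matrix (Fin 2) (Fin 2) ℂ)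
          + β * Matrix.trace (x₂ : Matrix (Fin 2) (Fin 2) ℂ)) • (x₁ : Matrix (Fin 2) (Fin 2) ℂ)
        - α • (x₂ : Matrix (Fin 2) (Fin 2) ℂ)
        - β • ((x₂ * x₁ : SL(2, ℂ)) : Matrix (Fin 2) (Fin 2) ℂ) := by
  have h3 : x₃ = (x₃ * x₁⁻¹ * x₂) * x₂⁻¹ * x₁ := by group
  have hkey : (x₃ : Matrix (Fin 2) (Fin 2) ℂ) =
      (α • (x₁ : Matrix (Fin 2) (Fin 2) ℂ) + β • 1) *
        ((x₂⁻¹ : SL(2, ℂ)) : Matrix (Fin 2) (Fin 2) ℂ) *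
        (x₁ : Matrix (Fin 2) (Fin 2) ℂ) := by
    conv_lhs => rw [h3]
    simp only [Matrix.SpecialLinearGroup.coe_mul]
    rw [← Matrix.SpecialLinearGroup.coe_mul, ← Matrix.SpecialLinearGroup.coe_mul, heq]
  have hd1 : Matrix.det (x₁ : Matrix (Fin 2) (Fin 2) ℂ) = 1 := x₁.2
  have hd2 : Matrix.det (x₂ : Matrix (Fin 2) (Fin 2) ℂ) = 1 := x₂.2
  rw [Matrix.det_fin_two] at hd1 hd2
  rw [hkey]
  simp only [Matrix.SpecialLinearGroup.coe_mul, Matrix.SpecialLinearGroup.coe_inv,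
    Matrix.adjugate_fin_two, Matrix.trace_fin_two]
  ext i j
  fin_cases i <;> fin_cases j <;>
    simp [Matrix.mul_apply, Fin.sum_univ_two, Matrix.one_apply]
  · linear_combination (-α * (x₂ : Matrix (Fin 2) (Fin 2) ℂ) 0 0) * hd1
  · linear_combination (-α * (x₂ : Matrix (Fin 2) (Fin 2) ℂ) 0 1) * hd1
  · linear_combination (-α * (x₂ : Matrix (Fin 2) (Fin 2) ℂ) 1 0) * hd1
  · linear_combination (-α * (x₂ : Matrix (Fin 2) (Fin 2) ℂ) 1 1) * hd1
end

section
/- Suppose t, β, ε ∈ ℂ satisfy ε ∈ {1,−1}, t² ≠ 1, β = ε·t/(t²−1), and the sextic β⁶ − εt³β⁵ + (3t⁴ − 6t² − 1)β⁴ + (8 − 3t²)εt³β³ + (9t⁴ + t⁶ − 12t⁴ + 6t²)β² − 8εt³β + 12t⁴ − 9t⁴ = 0 holds with σ₁ = 3t², σ₂ = 3t⁴, σ₃ = t⁶ substituted (i.e., β⁶ − εt³β⁵ + (σ₂−2σ₁−1)β⁴ + (8−σ₁)εt³β³ + (σ₁²+σ₃−4σ₂+2σ₁)β² − 8εt³β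 + 4σ₂−σ₁² = 0). Then t⁴(t²−2)⁴(2t²−1)² = 0, i.e., t² ∈ {0, 2, 1/2}. -/
theorem stmt_15 (t β ε : ℂ) (hε : ε = 1 ∨ ε = -1) (ht : t ^ 2 ≠ 1)
    (hβ : β = ε * t / (t ^ 2 - 1))
    (hsextic : β ^ 6 - ε * t ^ 3 * β ^ 5 + (3 * t ^ 4 - 2 * (3 * t ^ 2) - 1) * β ^ 4
        + (8 - 3 * t ^ 2) * (ε * t ^ 3) * β ^ 3
        + ((3 * t ^ 2) ^ 2 + t ^ 6 - 4 * (3 * t ^ 4) + 2 * (3 * t ^ 2)) * β ^ 2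
        - 8 * (ε * t ^ 3) * β + 4 * (3 * t ^ 4) - (3 * t ^ 2) ^ 2 = 0) :
    t ^ 4 * (t ^ 2 - 2) ^ 4 * (2 * t ^ 2 - 1) ^ 2 = 0 ∧
      (t ^ 2 = 0 ∨ t ^ 2 = 2 ∨ t ^ 2 = 1 / 2) := by
  have hd : t ^ 2 - 1 ≠ 0 := sub_ne_zero.mpr ht
  have hb : β * (t ^ 2 - 1) = ε * t := by rw [hβ]; field_simp
  have he : ε ^ 2 = 1 := by rcases hε with h | h <;> rw [h] <;> ring
  have key : t ^ 4 * (t ^ 2 - 2) ^ 4 * (2 * t ^ 2 - 1) ^ 2 = 0 := by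
    linear_combination ((t ^ 2 - 1) ^ 6) * hsextic
      + ((-14:ℂ)*ε^1*t^3 + (67:ℂ)*ε^1*t^5 + (-129:ℂ)*ε^1*t^7 + (126:ℂ)*ε^1*t^9 + (-64:ℂ)*ε^1*t^11 + (15:ℂ)*ε^1*t^13 + (-1:ℂ)*ε^1*t^15 + (1:ℂ)*ε^3*t^3 + (12:ℂ)*ε^3*t^5 + (-41:ℂ)*ε^3*t^7 + (45:ℂ)*ε^3*t^9 + (-20:ℂ)*ε^3*t^11 + (3:ℂ)*ε^3*t^13 + (-1:ℂ)*ε^5*t^5 + (-1:ℂ)*ε^5*t^7 + (1:ℂ)*ε^5*t^9 + (6:ℂ)*β^1*t^2 + (-33:ℂ)*β^1*t^4 + (76:ℂ)*β^1*t^6 + (-95:ℂ)*β^1*t^8 + (70:ℂ)*β^1*t^10 + (-31:ℂ)*β^1*t^12 + (8:ℂ)*β^1*t^14 + (-1:ℂ)*β^1*t^16 + (-1:ℂ)*β^1*ε^2*t^2 + (-11:ℂ)*β^1*ε^2*t^4 + (53:ℂ)*β^1*ε^2*t^6 + (-86:ℂ)*β^1*ε^2*t^8 + (65:ℂ)*β^1*ε^2*t^10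 + (-23:ℂ)*β^1*ε^2*t^12 + (3:ℂ)*β^1*ε^2*t^14 + (1:ℂ)*β^1*ε^4*t^4 + (-2:ℂ)*β^1*ε^4*t^8 + (1:ℂ)*β^1*ε^4*t^10 + (1:ℂ)*β^2*ε^1*t^1 + (10:ℂ)*β^2*ε^1*t^3 + (-64:ℂ)*β^2*ε^1*t^5 + (139:ℂ)*β^2*ε^1*t^7 + (-151:ℂ)*β^2*ε^1*t^9 + (88:ℂ)*β^2*ε^1*t^11 + (-26:ℂ)*β^2*ε^1*t^13 + (3:ℂ)*β^2*ε^1*t^15 + (-1:ℂ)*β^2*ε^3*t^3 + (1:ℂ)*β^2*ε^3*t^5 + (2:ℂ)*β^2*ε^3*t^7 + (-3:ℂ)*β^2*ε^3*t^9 + (1:ℂ)*β^2*ε^3*t^11 + (-1:ℂ)*β^3 + (-1:ℂ)*β^3*t^2 + (23:ℂ)*β^3*t^4 + (-65:ℂ)*β^3*t^6 + (85:ℂ)*β^3*t^8 + (-59:ℂ)*β^3*t^10 + (21:ℂ)*β^3*t^12 + (-3:ℂ)*β^3*t^14 + (1:ℂ)*β^3*ε^2*t^2 + (-2:ℂ)*β^3*ε^2*t^4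 + (-1:ℂ)*β^3*ε^2*t^6 + (5:ℂ)*β^3*ε^2*t^8 + (-4:ℂ)*β^3*ε^2*t^10 + (1:ℂ)*β^3*ε^2*t^12 + (-1:ℂ)*β^4*ε^1*t^1 + (3:ℂ)*β^4*ε^1*t^3 + (-1:ℂ)*β^4*ε^1*t^5 + (-6:ℂ)*β^4*ε^1*t^7 + (9:ℂ)*β^4*ε^1*t^9 + (-5:ℂ)*β^4*ε^1*t^11 + (1:ℂ)*β^4*ε^1*t^13 + (1:ℂ)*β^5 + (-5:ℂ)*β^5*t^2 + (10:ℂ)*β^5*t^4 + (-10:ℂ)*β^5*t^6 + (5:ℂ)*β^5*t^8 + (-1:ℂ)*β^5*t^10) * hb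
      + ((-13:ℂ)*t^4 + (78:ℂ)*t^6 + (-171:ℂ)*t^8 + (172:ℂ)*t^10 + (-84:ℂ)*t^12 + (18:ℂ)*t^14 + (-1:ℂ)*t^16 + (1:ℂ)*ε^2*t^4 + (11:ℂ)*ε^2*t^6 + (-42:ℂ)*ε^2*t^8 + (46:ℂ)*ε^2*t^10 + (-20:ℂ)*ε^2*t^12 + (3:ℂ)*ε^2*t^14 + (-1:ℂ)*ε^4*t^6 + (-1:ℂ)*ε^4*t^8 + (1:ℂ)*ε^4*t^10) * he
  refine ⟨key, ?_⟩
  rcases mul_eq_zero.mp key with h | h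
  · rcases mul_eq_zero.mp h with h | h
    · have ht0 : t = 0 := pow_eq_zero_iff (by norm_num : (4:ℕ) ≠ 0) |>.mp h
      exact Or.inl (by rw [ht0]; ring)
    · have h2 : t ^ 2 - 2 = 0 := pow_eq_zero_iff (by norm_num : (4:ℕ) ≠ 0) |>.mp h
      exact Or.inr (Or.inl (by linear_combination h2))
  · have h2 : 2 * t ^ 2 - 1 = 0 := pow_eq_zero_iff (by norm_num : (2:ℕ) ≠ 0) |>.mp h
    exact Or.inr (Or.inr (by linear_combination h2 / 2))
end
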